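/- In the group G_ΔL, the element c = c₁c₂c₃c₄ commutes with ℓ₁ and with ℓ₂; consequently c also commutes with ℓ∞ = (c·ℓ₁·ℓ₂)⁻¹, and the element ℓ₁ℓ₂ℓ∞ = c⁻¹ commutes with each of ℓ₁, ℓ₂, ℓ∞. -/

import Mathlib

/-!
Relations (R5)–(R8) say how conjugation by `ℓ₁` acts on `c₁, c₂, c₃, c₄`, and (R1)–(R4) do the
same for `ℓ₂`. Since conjugation is a homomorphism, `ℓᵢ⁻¹ c ℓᵢ` is the product of the four
conjugated generators, and in both cases that product collapses back to `c₁c₂c₃c₄`. Relation (R9)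
then expresses `ℓ∞` as `(c ℓ₁ ℓ₂)⁻¹`, from which the remaining claims are formal.
-/

/-- Relations of `G_ΔL`; generators `c₁,c₂,c₃,c₄,ℓ₁,ℓ₂,ℓ∞` are `0,…,6`. -/
def GdLrels : Set (FreeGroup (Fin 7)) :=
  let c₁ : FreeGroup (Fin 7) := FreeGroup.of 0
  let c₂ : FreeGroup (Fin 7) := FreeGroup.of 1
  let c₃ : FreeGroup (Fin 7) := FreeGroup.of 2
  let c₄ : FreeGroup (Fin 7) := FreeGroup.of 3
  let l₁ : FreeGroup (Fin 7) := FreeGroup.of 4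
  let l₂ : FreeGroup (Fin 7) := FreeGroup.of 5
  let li : FreeGroup (Fin 7) := FreeGroup.of 6
  { l₂ * c₁ * l₂⁻¹ * c₁⁻¹,
    l₂⁻¹ * c₂ * l₂ * ((c₂ * c₃ * c₄) * c₃ * (c₂ * c₃ * c₄)⁻¹)⁻¹,
    l₂⁻¹ * c₃ * l₂ * ((c₂ * c₃) * c₄ * (c₂ * c₃)⁻¹)⁻¹,
    l₂⁻¹ * c₄ * l₂ * c₂⁻¹,
    l₁⁻¹ * c₁ * l₁ * ((c₁ * c₂) * c₃ * (c₁ * c₂)⁻¹)⁻¹,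
    l₁⁻¹ * c₂ * l₁ * ((c₁ * c₂) * c₁ * (c₁ * c₂)⁻¹)⁻¹,
    l₁⁻¹ * c₃ * l₁ * (c₁ * c₂ * c₁⁻¹)⁻¹,
    l₁ * c₄ * l₁⁻¹ * c₄⁻¹,
    c₁ * c₂ * c₃ * c₄ * l₁ * l₂ * li }

abbrev GdL := PresentedGroup GdLrels

theorem Commute.of_inv_mul_mul_eq {G : Type*} [Group G] {a g : G} (h : g⁻¹ * a * g = a) :
    Commute a g := by
  rw [commute_iff_eq]
  conv_rhs => rw [← h]
  group

local notation "c₁" => (PresentedGroup.of 0 : GdL)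
local notation "c₂" => (PresentedGroup.of 1 : GdL)
local notation "c₃" => (PresentedGroup.of 2 : GdL)
local notation "c₄" => (PresentedGroup.of 3 : GdL)
local notation "ℓ₁" => (PresentedGroup.of 4 : GdL)
local notation "ℓ₂" => (PresentedGroup.of 5 : GdL)
local notation "ℓ∞" => (PresentedGroup.of 6 : GdL)

theorem GdL.relations :
    ℓ₂ * c₁ * ℓ₂⁻¹ = c₁ ∧
    ℓ₂⁻¹ * c₂ * ℓ₂ = (c₂ * c₃ * c₄) * c₃ * (c₂ * c₃ * c₄)⁻¹ ∧
    ℓ₂⁻¹ * c₃ * ℓ₂ = (c₂ * c₃) * c₄ * (c₂ * c₃)⁻¹ ∧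
    ℓ₂⁻¹ * c₄ * ℓ₂ = c₂ ∧
    ℓ₁⁻¹ * c₁ * ℓ₁ = (c₁ * c₂) * c₃ * (c₁ * c₂)⁻¹ ∧
    ℓ₁⁻¹ * c₂ * ℓ₁ = (c₁ * c₂) * c₁ * (c₁ * c₂)⁻¹ ∧
    ℓ₁⁻¹ * c₃ * ℓ₁ = c₁ * c₂ * c₁⁻¹ ∧
    ℓ₁ * c₄ * ℓ₁⁻¹ = c₄ ∧
    c₁ * c₂ * c₃ * c₄ * ℓ₁ * ℓ₂ * ℓ∞ = 1 := by
  have h : ∀ r ∈ GdLrels, PresentedGroup.mk GdLrels r = 1 := fun _ => PresentedGroup.one_of_mem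
  -- `rw` rather than `simp` unfolds `GdLrels` also inside the type of `PresentedGroup.mk GdLrels`
  rw [GdLrels] at h
  simp only [Set.forall_mem_insert, Set.mem_singleton_iff, forall_eq, map_mul, map_inv,
    mul_inv_eq_one] at h
  exact h

theorem GdL.commute_c_ℓ₁ : Commute (c₁ * c₂ * c₃ * c₄) ℓ₁ := by
  obtain ⟨-, -, -, -, h₁, h₂, h₃, h₄, -⟩ := GdL.relations
  have h₄' : ℓ₁⁻¹ * c₄ * ℓ₁ = c₄ := Commute.inv_mul_cancel (mul_inv_eq_iff_eq_mul.mp h₄)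
  apply Commute.of_inv_mul_mul_eq
  calc ℓ₁⁻¹ * (c₁ * c₂ * c₃ * c₄) * ℓ₁
      = (ℓ₁⁻¹ * c₁ * ℓ₁) * (ℓ₁⁻¹ * c₂ * ℓ₁) * (ℓ₁⁻¹ * c₃ * ℓ₁) * (ℓ₁⁻¹ * c₄ * ℓ₁) := by group
    _ = (c₁ * c₂) * c₃ * (c₁ * c₂)⁻¹ * ((c₁ * c₂) * c₁ * (c₁ * c₂)⁻¹) * (c₁ * c₂ * c₁⁻¹) * c₄ := by
      rw [h₁, h₂, h₃, h₄']
    _ = c₁ * c₂ * c₃ * c₄ := by group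

theorem GdL.commute_c_ℓ₂ : Commute (c₁ * c₂ * c₃ * c₄) ℓ₂ := by
  obtain ⟨h₁, h₂, h₃, h₄, -⟩ := GdL.relations
  have h₁' : ℓ₂⁻¹ * c₁ * ℓ₂ = c₁ := Commute.inv_mul_cancel (mul_inv_eq_iff_eq_mul.mp h₁)
  apply Commute.of_inv_mul_mul_eq
  calc ℓ₂⁻¹ * (c₁ * c₂ * c₃ * c₄) * ℓ₂
      = (ℓ₂⁻¹ * c₁ * ℓ₂) * (ℓ₂⁻¹ * c₂ * ℓ₂) * (ℓ₂⁻¹ * c₃ * ℓ₂) * (ℓ₂⁻¹ * c₄ * ℓ₂) := by group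
    _ = c₁ * ((c₂ * c₃ * c₄) * c₃ * (c₂ * c₃ * c₄)⁻¹) * ((c₂ * c₃) * c₄ * (c₂ * c₃)⁻¹) * c₂ := by
      rw [h₁', h₂, h₃, h₄]
    _ = c₁ * c₂ * c₃ * c₄ := by group

theorem GdL.ℓ_infty_eq : ℓ∞ = (c₁ * c₂ * c₃ * c₄ * ℓ₁ * ℓ₂)⁻¹ :=
  eq_inv_of_mul_eq_one_right GdL.relations.2.2.2.2.2.2.2.2

theorem c_commutes_with_lines :
    let c : GdL := PresentedGroup.of 0 * PresentedGroup.of 1 *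
      PresentedGroup.of 2 * PresentedGroup.of 3
    Commute c (PresentedGroup.of 4) ∧
    Commute c (PresentedGroup.of 5) ∧
    (PresentedGroup.of 6 : GdL) = (c * PresentedGroup.of 4 * PresentedGroup.of 5)⁻¹ ∧
    Commute c (PresentedGroup.of 6) ∧
    (PresentedGroup.of 4 * PresentedGroup.of 5 * PresentedGroup.of 6 : GdL) = c⁻¹ ∧
    Commute (PresentedGroup.of 4 * PresentedGroup.of 5 * PresentedGroup.of 6 : GdL)
      (PresentedGroup.of 4) ∧
    Commute (PresentedGroup.of 4 * PresentedGroup.of 5 * PresentedGroup.of 6 : GdL)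
      (PresentedGroup.of 5) ∧
    Commute (PresentedGroup.of 4 * PresentedGroup.of 5 * PresentedGroup.of 6 : GdL)
      (PresentedGroup.of 6) := by
  intro c
  have comm₁ : Commute c ℓ₁ := GdL.commute_c_ℓ₁
  have comm₂ : Commute c ℓ₂ := GdL.commute_c_ℓ₂
  have h_inf : ℓ∞ = (c * ℓ₁ * ℓ₂)⁻¹ := GdL.ℓ_infty_eq
  have comm_inf : Commute c ℓ∞ :=
    h_inf ▸ (((Commute.refl c).mul_right comm₁).mul_right comm₂).inv_right
  have hprod : ℓ₁ * ℓ₂ * ℓ∞ = c⁻¹ := by rw [h_inf]; group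
  exact ⟨comm₁, comm₂, h_inf, comm_inf, hprod,
    hprod ▸ comm₁.inv_left, hprod ▸ comm₂.inv_left, hprod ▸ comm_inf.inv_left⟩
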